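/- arXiv:1707.08751 — 5 statements merged into one kernel-verified Lean document; each statement's English description precedes it below -/
import Mathlib

section
/- If a run satisfies T-consistency and Δ-weak growth, then it is T-Δ-acceptable. That is: for all times m ≤ m', agents i, j, and lists X, if honest m i holds, X is a T-prefix of ledger m i, and honest (m' + Δ) j holds, then X is a T-prefix of ledger (m' + Δ) j. -/
/-- `X` is a `T`-prefix of `L`: `X` is a prefix of `L` and `X.length + T ≤ L.length`. -/
def TPrefix {Tx : Type*} (T : ℕ) (X L : List Tx) : Prop :=
  X <+: L ∧ X.length + T ≤ L.length

/-- A run satisfies `T`-consistency. -/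
def TConsistent {Agent Tx : Type*} (T : ℕ) (honest : ℕ → Agent → Prop)
    (ledger : ℕ → Agent → List Tx) : Prop :=
  ∀ (m m' : ℕ) (i j : Agent) (X : List Tx), m ≤ m' → honest m i →
    TPrefix T X (ledger m i) → honest m' j → X <+: ledger m' j

/-- A run satisfies `Δ`-weak growth. -/
def WeakGrowth {Agent Tx : Type*} (Δ : ℕ) (honest : ℕ → Agent → Prop)
    (ledger : ℕ → Agent → List Tx) : Prop :=
  ∀ (m m' : ℕ) (i j : Agent), m + Δ ≤ m' → honest m i → honest m' j →
    (ledger m i).length ≤ (ledger m' j).length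

/-- A run is `T`-`Δ`-acceptable. -/
def Acceptable {Agent Tx : Type*} (T Δ : ℕ) (honest : ℕ → Agent → Prop)
    (ledger : ℕ → Agent → List Tx) : Prop :=
  ∀ (m m' : ℕ) (i j : Agent) (X : List Tx), m ≤ m' → honest m i →
    TPrefix T X (ledger m i) → honest (m' + Δ) j →
    TPrefix T X (ledger (m' + Δ) j)

theorem TPrefix.of_prefix_of_length_le {Tx : Type*} {T : ℕ} {X L L' : List Tx}
    (hX : TPrefix T X L) (hpre : X <+: L') (hlen : L.length ≤ L'.length) :
    TPrefix T X L' :=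
  ⟨hpre, hX.2.trans hlen⟩

/-- If a run satisfies `T`-consistency and `Δ`-weak growth, then it is
`T`-`Δ`-acceptable. -/
theorem consistency_and_growth_imply_acceptable {Agent Tx : Type*} (T Δ : ℕ)
    (honest : ℕ → Agent → Prop) (ledger : ℕ → Agent → List Tx)
    (hcons : TConsistent T honest ledger)
    (hgrow : WeakGrowth Δ honest ledger) :
    Acceptable T Δ honest ledger := by
  intro m m' i j X hmm' hi hX hj
  have hpre : X <+: ledger (m' + Δ) j :=
    hcons m (m' + Δ) i j X (hmm'.trans (Nat.le_add_right m' Δ)) hi hX hj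
  have hlen : (ledger m i).length ≤ (ledger (m' + Δ) j).length :=
    hgrow m (m' + Δ) i j (Nat.add_le_add_right hmm' Δ) hi hj
  exact hX.of_prefix_of_length_le hpre hlen
end

section
/- Induction rule for indexical common knowledge: let φ, ψ : Point → Prop. Suppose that for every agent i and every point p, if i ∈ H p and ψ p hold then (Y (E_H (fun q => φ q ∧ ψ q))) p holds. Then for every agent i and every point p, if i ∈ H p and ψ p hold then (C_H^Y φ) p holds. -/
/-- The simple modal operator induced by the relation `Y`. -/
def Yop {Point : Type*} (Y : Point → Point → Prop) (φ : Point → Prop) (p : Point) : Prop :=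
  ∀ q, Y p q → φ q

/-- Belief of agent `i` relative to the indexical set `H`:
`(B_i^H φ) p := ∀ q, q ∼_i p → i ∈ H q → φ q`. -/
def Bop {Point Agent : Type*} (H : Point → Set Agent) (sim : Agent → Point → Point → Prop)
    (i : Agent) (φ : Point → Prop) (p : Point) : Prop :=
  ∀ q, sim i q p → i ∈ H q → φ q

/-- `(E_H φ) p := ∀ i ∈ H p, (B_i^H φ) p`. -/
def Eop {Point Agent : Type*} (H : Point → Set Agent) (sim : Agent → Point → Point → Prop)
    (φ : Point → Prop) (p : Point) : Prop :=
  ∀ i ∈ H p, Bop H sim i φ p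

/-- `(Y∘E_H)^n`, with `(Y∘E_H)^0 = id`, `(Y∘E_H)^{n+1} φ = Y (E_H ((Y∘E_H)^n φ))`. -/
def YEiter {Point Agent : Type*} (H : Point → Set Agent) (sim : Agent → Point → Point → Prop)
    (Y : Point → Point → Prop) : ℕ → (Point → Prop) → (Point → Prop)
  | 0, φ => φ
  | n + 1, φ => Yop Y (Eop H sim (YEiter H sim Y n φ))

/-- Indexical common knowledge: `(C_H^Y φ) p := ∀ n ≥ 1, ((Y∘E_H)^n φ) p`. -/
def Cop {Point Agent : Type*} (H : Point → Set Agent) (sim : Agent → Point → Point → Prop)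
    (Y : Point → Point → Prop) (φ : Point → Prop) (p : Point) : Prop :=
  ∀ n, 1 ≤ n → YEiter H sim Y n φ p

/-- A single `(H-Y)`-reachability step: there are an agent `i` and a point `p'` with
`Y p p'`, `i ∈ H p'`, `i ∈ H q`, and `q ∼_i p'`. -/
def Step {Point Agent : Type*} (H : Point → Set Agent) (sim : Agent → Point → Point → Prop)
    (Y : Point → Point → Prop) (p q : Point) : Prop :=
  ∃ (i : Agent) (p' : Point), Y p p' ∧ i ∈ H p' ∧ i ∈ H q ∧ sim i q p'

/-- `q` is `(H-Y)`-reachable from `p` in `k` steps. -/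
def ReachN {Point Agent : Type*} (H : Point → Set Agent) (sim : Agent → Point → Point → Prop)
    (Y : Point → Point → Prop) : ℕ → Point → Point → Prop
  | 0, p, q => p = q
  | k + 1, p, q => ∃ mid, Step H sim Y p mid ∧ ReachN H sim Y k mid q

/-! Points where `ψ` holds and some agent is in `H` form an invariant: by hypothesis every
`Y∘E_H` step from such a point lands in `φ ∧ ψ` at points where the believing agent is in `H`,
so induction on `n` gives `(Y∘E_H)^(n+1) φ` there. -/

section Monotonicity

variable {Point Agent : Type*} {H : Point → Set Agent} {sim : Agent → Point → Point → Prop}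
  {Y : Point → Point → Prop} {φ φ' : Point → Prop} {p : Point}

theorem Yop.mono (h : ∀ q, φ q → φ' q) (hφ : Yop Y φ p) : Yop Y φ' p :=
  fun q hq => h q (hφ q hq)

theorem Bop.mono {i : Agent} (h : ∀ q, i ∈ H q → φ q → φ' q) (hφ : Bop H sim i φ p) :
    Bop H sim i φ' p :=
  fun q hq hi => h q hi (hφ q hq hi)

theorem Eop.mono (h : ∀ i q, i ∈ H q → φ q → φ' q) (hφ : Eop H sim φ p) :
    Eop H sim φ' p :=
  fun i hi => (hφ i hi).mono (h i)

end Monotonicity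

theorem yeIter_succ_of_invariant {Point Agent : Type*} {H : Point → Set Agent}
    {sim : Agent → Point → Point → Prop} {Y : Point → Point → Prop} {φ ψ : Point → Prop}
    (hyp : ∀ (i : Agent) (p : Point), i ∈ H p → ψ p →
      Yop Y (Eop H sim (fun q => φ q ∧ ψ q)) p) (n : ℕ) :
    ∀ (i : Agent) (p : Point), i ∈ H p → ψ p → YEiter H sim Y (n + 1) φ p := by
  induction n with
  | zero => exact fun i p hi hp => (hyp i p hi hp).mono fun _ => Eop.mono fun _ _ _ => And.left
  | succ n ih =>
    exact fun i p hi hp =>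
      (hyp i p hi hp).mono fun _ => Eop.mono fun j q hj hq => ih j q hj hq.2

/-- Induction rule for indexical common knowledge. -/
theorem induction_rule {Point Agent : Type*} (H : Point → Set Agent)
    (sim : Agent → Point → Point → Prop) (Y : Point → Point → Prop)
    (φ ψ : Point → Prop)
    (hyp : ∀ (i : Agent) (p : Point), i ∈ H p → ψ p →
      Yop Y (Eop H sim (fun q => φ q ∧ ψ q)) p) :
    ∀ (i : Agent) (p : Point), i ∈ H p → ψ p → Cop H sim Y φ p := by
  intro i p hi hp n hn
  obtain ⟨m, rfl⟩ := Nat.exists_eq_add_of_le' hn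
  exact yeIter_succ_of_invariant hyp m i p hi hp
end

section
/- For every k ≥ 1, every predicate φ : Point → Prop, and every point p: ((Y∘E_H)^k φ) p holds if and only if φ q holds for every point q that is (H-Y)-reachable in k steps from p. -/
section Reachability

variable {Point Agent : Type*} (H : Point → Set Agent) (sim : Agent → Point → Point → Prop)
  (Y : Point → Point → Prop)

theorem Yop_Eop_iff_forall_step (ψ : Point → Prop) (p : Point) :
    Yop Y (Eop H sim ψ) p ↔ ∀ q, Step H sim Y p q → ψ q := by
  constructor
  · rintro h q ⟨i, p', hY, hip', hiq, hsim⟩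
    exact h p' hY i hip' q hsim hiq
  · intro h p' hY i hip' q hsim hiq
    exact h q ⟨i, p', hY, hip', hiq, hsim⟩

theorem YEiter_iff_forall_reachN (k : ℕ) (φ : Point → Prop) (p : Point) :
    YEiter H sim Y k φ p ↔ ∀ q, ReachN H sim Y k p q → φ q := by
  induction k generalizing p with
  | zero => exact ⟨fun h q hpq => hpq ▸ h, fun h => h p rfl⟩
  | succ k ih =>
    simp only [YEiter, ReachN, Yop_Eop_iff_forall_step, ih]
    exact ⟨fun h q ⟨mid, hstep, hreach⟩ => h mid hstep q hreach,
      fun h mid hstep q hreach => h q ⟨mid, hstep, hreach⟩⟩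

end Reachability

/-- `((Y∘E_H)^k φ) p` holds iff `φ q` holds for every point `q` that is
`(H-Y)`-reachable in `k` steps from `p`, for every `k ≥ 1`. -/
theorem iter_iff_reach {Point Agent : Type*} (H : Point → Set Agent)
    (sim : Agent → Point → Point → Prop) (Y : Point → Point → Prop) :
    ∀ k, 1 ≤ k → ∀ (φ : Point → Prop) (p : Point),
      YEiter H sim Y k φ p ↔ ∀ q, ReachN H sim Y k p q → φ q :=
  fun k _ => YEiter_iff_forall_reachN H sim Y k
end

section
/- Suppose φ, ψ : Point → Prop are such that for every agent i and point p, i ∈ H p and ψ p imply (Y (E_H (fun q => φ q ∧ ψ q))) p. Then for every agent i, every point p with i ∈ H p and ψ p, every k ≥ 1, and every point q that is (H-Y)-reachable in k steps from p, both φ q and ψ q hold. -/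
/-! Every step lands at a point where its agent is in `H`, so the invariant "some agent is in `H`
and `ψ` holds" propagates along steps, and the hypothesis turns it into `φ ∧ ψ` one step later. -/

section Reachability

variable {Point Agent : Type*} {H : Point → Set Agent} {sim : Agent → Point → Point → Prop}
  {Y : Point → Point → Prop}

theorem ReachN.reflTransGen {k : ℕ} {p q : Point} (h : ReachN H sim Y k p q) :
    Relation.ReflTransGen (Step H sim Y) p q := by
  induction k generalizing p with
  | zero => exact h ▸ Relation.ReflTransGen.refl
  | succ k ih =>
    obtain ⟨mid, hstep, hrest⟩ := h
    exact .head hstep (ih hrest)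

theorem ReachN.transGen {k : ℕ} {p q : Point} (h : ReachN H sim Y (k + 1) p q) :
    Relation.TransGen (Step H sim Y) p q :=
  let ⟨_, hstep, hrest⟩ := h
  .head' hstep hrest.reflTransGen

variable {φ ψ : Point → Prop}
  (hyp : ∀ (i : Agent) (p : Point), i ∈ H p → ψ p → Yop Y (Eop H sim (fun q => φ q ∧ ψ q)) p)
include hyp

theorem Step.exists_mem_and_of_induction_hyp {i : Agent} {p q : Point} (hi : i ∈ H p)
    (hψ : ψ p) (h : Step H sim Y p q) : (∃ j, j ∈ H q) ∧ φ q ∧ ψ q :=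
  let ⟨j, p', hY, hjp', hjq, hsim⟩ := h
  ⟨⟨j, hjq⟩, hyp i p hi hψ p' hY j hjp' q hsim hjq⟩

theorem Relation.TransGen.and_of_induction_hyp {i : Agent} {p q : Point} (hi : i ∈ H p)
    (hψ : ψ p) (h : Relation.TransGen (Step H sim Y) p q) : φ q ∧ ψ q := by
  suffices (∃ j, j ∈ H q) ∧ φ q ∧ ψ q from this.2
  induction h with
  | single hstep => exact hstep.exists_mem_and_of_induction_hyp hyp hi hψ
  | tail _ hstep ih =>
    obtain ⟨⟨j, hj⟩, -, hψr⟩ := ih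
    exact hstep.exists_mem_and_of_induction_hyp hyp hj hψr

end Reachability

/-- If `i ∈ H p` and `ψ p` imply `(Y (E_H (φ ∧ ψ))) p` for all `i, p`, then from any
point `p` with `i ∈ H p` and `ψ p`, every point `q` that is `(H-Y)`-reachable in
`k ≥ 1` steps from `p` satisfies both `φ q` and `ψ q`. -/
theorem reach_of_induction_hyp {Point Agent : Type*} (H : Point → Set Agent)
    (sim : Agent → Point → Point → Prop) (Y : Point → Point → Prop)
    (φ ψ : Point → Prop)
    (hyp : ∀ (i : Agent) (p : Point), i ∈ H p → ψ p →
      Yop Y (Eop H sim (fun q => φ q ∧ ψ q)) p) :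
    ∀ (i : Agent) (p : Point), i ∈ H p → ψ p →
      ∀ k, 1 ≤ k → ∀ q, ReachN H sim Y k p q → φ q ∧ ψ q := by
  intro i p hi hψ k hk q hreach
  obtain ⟨m, rfl⟩ := Nat.exists_eq_add_of_le' hk
  exact hreach.transGen.and_of_induction_hyp hyp hi hψ
end

section
/- T-consistency alone does not imply T-Δ-acceptability: for every T ≥ 1 there exist a type Agent (with at least two agents), a type Tx, and a run (honest, ledger) that satisfies T-consistency but, for every Δ : ℕ, is not T-Δ-acceptable. -/
/-! Consistency constrains only what honest agents agree on, not how long their ledgers are.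
A run whose ledgers never exceed length `T` is vacuously `T`-consistent, since the empty list
is its only `T`-prefix; but if an honest ledger of length `T` is later replaced by the empty
one, the empty `T`-prefix is lost, so no delay `Δ` makes the run acceptable. -/

theorem TPrefix.eq_nil_of_length_le {Tx : Type*} {T : ℕ} {X L : List Tx}
    (hX : TPrefix T X L) (hL : L.length ≤ T) : X = [] :=
  List.eq_nil_of_length_eq_zero (by have := hX.2; omega)

theorem tConsistent_of_length_le {Agent Tx : Type*} {T : ℕ} {honest : ℕ → Agent → Prop}
    {ledger : ℕ → Agent → List Tx} (h : ∀ m i, (ledger m i).length ≤ T) :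
    TConsistent T honest ledger := by
  intro m _ i _ X _ _ hX _
  rw [hX.eq_nil_of_length_le (h m i)]
  exact List.nil_prefix

theorem not_acceptable_of_length_lt {Agent Tx : Type*} {T Δ : ℕ} {honest : ℕ → Agent → Prop}
    {ledger : ℕ → Agent → List Tx} {m m' : ℕ} {i j : Agent} (hm : m ≤ m') (hi : honest m i)
    (hlong : T ≤ (ledger m i).length) (hj : honest (m' + Δ) j)
    (hshort : (ledger (m' + Δ) j).length < T) :
    ¬ Acceptable T Δ honest ledger := fun hacc =>
  absurd (hacc m m' i j [] hm hi ⟨List.nil_prefix, by simpa using hlong⟩ hj).2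
    (by simpa using hshort)

/-- `T`-consistency alone does not imply `T`-`Δ`-acceptability: for every `T ≥ 1`
there are a type of agents (with at least two agents), a type of transactions, and a
run satisfying `T`-consistency that is not `T`-`Δ`-acceptable for any `Δ`. -/
theorem consistency_not_sufficient :
    ∀ T : ℕ, 1 ≤ T →
      ∃ (Agent : Type) (_ : Nontrivial Agent) (Tx : Type)
        (honest : ℕ → Agent → Prop) (ledger : ℕ → Agent → List Tx),
        TConsistent T honest ledger ∧
          ∀ Δ : ℕ, ¬ Acceptable T Δ honest ledger := by
  intro T hT
  let ledger : ℕ → Bool → List Unit := fun m _ => if m = 0 then List.replicate T () else []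
  refine ⟨Bool, inferInstance, Unit, fun _ _ => True, ledger, ?_, fun Δ => ?_⟩
  · refine tConsistent_of_length_le fun m _ => ?_
    by_cases hm : m = 0 <;> simp [ledger, hm]
  · refine not_acceptable_of_length_lt (m' := 1) (i := true) (j := true)
      zero_le_one trivial ?_ trivial ?_
    · simp [ledger]
    · simp only [ledger, Nat.add_eq_zero_iff, one_ne_zero, false_and, if_false,
        List.length_nil]
      exact hT
end
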